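/- arXiv:2007.07520 — 2 statements merged into one kernel-verified Lean document; each statement's English description precedes it below -/
import Mathlib

section
/- Let Γ be a finite simple graph whose line graph L(Γ) is a Neumaier graph. Then one of the following holds: (1) there is a positive integer s such that L(Γ) is isomorphic to the line graph of the complete bipartite graph K_{s+1,s+1} (the (s+1)×(s+1) rook graph); (2) there is an integer s ≥ 2 such that L(Γ) is isomorphic to the line graph of the complete graph K_{s+2} (the Johnson graph J(s+2,2)); (3) L(Γ) is isomorphic to the complete tripartite graph K_{2,2,2} (the octahedral graph). In particular, L(Γ) is a strongly regular graph. -/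
open scoped Classical
open Matrix

variable {V : Type*}

/-- `G` is edge-regular with parameters `(v, k, l)`: it has `v` vertices, every vertex has
degree `k`, and every pair of adjacent vertices has exactly `l` common neighbours. -/
def IsEdgeRegular [Fintype V] (G : SimpleGraph V) (v k l : ℕ) : Prop :=
  Fintype.card V = v ∧ G.IsRegularOfDegree k ∧
    ∀ x y : V, G.Adj x y → Fintype.card (G.commonNeighbors x y) = l

/-- `C` is an `e`-regular clique of `G` (for `e > 0`): a clique such that every vertex
outside `C` is adjacent to exactly `e` vertices of `C`. -/
def IsRegularCliqueWith [Fintype V] (G : SimpleGraph V) (C : Finset V) (e : ℕ) : Prop :=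
  G.IsClique ↑C ∧ 0 < e ∧ ∀ x : V, x ∉ C → (C.filter (fun y => G.Adj x y)).card = e

/-- A Neumaier graph: a non-complete edge-regular graph containing a regular clique. -/
def IsNeumaier [Fintype V] (G : SimpleGraph V) : Prop :=
  (∃ v k l : ℕ, IsEdgeRegular G v k l) ∧ G ≠ ⊤ ∧ ∃ (C : Finset V) (e : ℕ), IsRegularCliqueWith G C e

/-- A graph is complete multipartite when non-adjacency (together with equality) is
a transitive relation on the vertices. -/
def IsCompleteMultipartite (G : SimpleGraph V) : Prop :=
  ∀ x y z : V, ¬G.Adj x y → ¬G.Adj y z → ¬G.Adj x z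

/-- `θ` is a (real) eigenvalue of the adjacency matrix of `G`. -/
def IsAdjEigenvalue [Fintype V] (G : SimpleGraph V) (θ : ℝ) : Prop :=
  ∃ f : V → ℝ, f ≠ 0 ∧ G.adjMatrix ℝ *ᵥ f = θ • f

/-- The average, over all edges of `G`, of the number of common neighbours of the
two endpoints of the edge. -/
noncomputable def avgLambda [Fintype V] (G : SimpleGraph V) : ℝ :=
  (∑ ed ∈ G.edgeFinset, Sym2.lift
      ⟨fun x y => ((G.commonNeighbors x y).ncard : ℝ),
       fun x y => by dsimp only; rw [SimpleGraph.commonNeighbors_symm]⟩ ed) / (G.edgeFinset.card : ℝ)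

/-!
Let `L(G)` be edge-regular with parameters `(n, k, l)`. Counting in `G`, the edge `ab` has
`deg a + deg b - 2` neighbours in `L(G)`, and the edges `ab, ac` have `deg a - 2 + [b ~ c]` common
neighbours; hence `deg a + deg b = k + 2` along every edge and `deg u + [p ~ q] = l + 2` along
every path `p u q`. A regular clique of `L(G)` is a family of pairwise intersecting edges meeting
every edge of `G`.

If `G` has a triangle, the vertices of a triangle have degree `l + 1` and complete neighbourhoods,
so the closed neighbourhood of one of them is a component `K_{l+2}`; as the clique meets every
edge, `G` has no further edges. If `G` is triangle-free, the clique is a star at some vertex `u`,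
every edge has exactly one end in `N(u)`, all non-isolated vertices have degree `l + 2`, and `G` is
`K_{l+2,l+2}` up to isolated vertices. Finally, two disjoint edges of `K_m` (resp. `K_{m,m}`) are
joined by `4` (resp. `2`) edges, so these line graphs are strongly regular.
-/

namespace SimpleGraph

variable {W : Type*} {G : SimpleGraph V}

open Finset

lemma card_eq_card_of_forall_mem_iff (s : Set G.edgeSet) [Fintype s] {T : Finset (Sym2 V)}
    (hT : ∀ e, e ∈ T ↔ ∃ h : e ∈ G.edgeSet, ⟨e, h⟩ ∈ s) :
    Fintype.card s = #T := by
  rw [← Set.toFinset_card, ← card_map (Function.Embedding.subtype _)]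
  congr 1
  ext e
  simp [hT]

section Counting

variable [Fintype V]

lemma lineGraph_degree_add_two {a b : V} (h : G.Adj a b) :
    G.lineGraph.degree ⟨s(a, b), h⟩ + 2 = G.degree a + G.degree b := by
  have hT : ∀ e, e ∈ (G.incidenceFinset a ∪ G.incidenceFinset b).erase s(a, b) ↔
      ∃ he : e ∈ G.edgeSet, ⟨e, he⟩ ∈ G.lineGraph.neighborSet ⟨s(a, b), h⟩ := by
    intro e
    simp only [mem_erase, ne_eq, mem_union, mem_incidenceFinset, incidenceSet, Set.mem_ofPred_eq,
      mem_neighborSet, lineGraph_adj_iff_exists, eq_comm, Subtype.ext_iff, Sym2.mem_iff,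
      exists_eq_or_imp', existsAndEq, true_and, exists_and_left, exists_prop, and_congr_right_iff]
    tauto
  have hinter : G.incidenceFinset a ∩ G.incidenceFinset b = {s(a, b)} := by
    simpa [← coe_inj, incidenceFinset] using G.incidenceSet_inter_incidenceSet_of_adj h
  have hmem : s(a, b) ∈ G.incidenceFinset a ∪ G.incidenceFinset b := by
    simp [incidenceSet, h]
  have hunion := card_union_add_card_inter (G.incidenceFinset a) (G.incidenceFinset b)
  rw [hinter, card_singleton, card_incidenceFinset_eq_degree,
    card_incidenceFinset_eq_degree] at hunion
  have hpos := card_pos.2 ⟨_, hmem⟩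
  rw [← card_neighborSet_eq_degree, card_eq_card_of_forall_mem_iff _ hT, card_erase_of_mem hmem]
  omega

lemma card_commonNeighbors_lineGraph_of_adj {a b c : V} (hab : G.Adj a b) (hac : G.Adj a c)
    (hbc : b ≠ c) :
    Fintype.card (G.lineGraph.commonNeighbors ⟨s(a, b), hab⟩ ⟨s(a, c), hac⟩) + 2 =
      G.degree a + if G.Adj b c then 1 else 0 := by
  have hT : ∀ e, e ∈ G.incidenceFinset a \ {s(a, b), s(a, c)} ∪ ({s(b, c)} ∩ G.edgeFinset) ↔
      ∃ he : e ∈ G.edgeSet,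
        ⟨e, he⟩ ∈ G.lineGraph.commonNeighbors ⟨s(a, b), hab⟩ ⟨s(a, c), hac⟩ := by
    intro e
    simp only [mem_commonNeighbors, lineGraph_adj_iff_exists, ne_eq, Subtype.ext_iff, mem_union,
      mem_sdiff, mem_incidenceFinset, incidenceSet, Set.mem_ofPred_eq, mem_insert, mem_singleton,
      not_or, mem_inter, mem_edgeFinset, Sym2.mem_iff, exists_eq_or_imp, existsAndEq, true_and,
      exists_and_left, exists_prop]
    constructor
    · rintro (⟨⟨he, ha⟩, hb, hc⟩ | ⟨rfl, he⟩)
      · exact ⟨⟨Ne.symm hb, .inl ha⟩, Ne.symm hc, he, .inl ha⟩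
      · refine ⟨⟨?_, .inr (Sym2.mem_mk_left _ _)⟩, ?_, he, .inr (Sym2.mem_mk_right _ _)⟩ <;>
          simp [hab.ne, hac.ne]
    · rintro ⟨⟨hb, hab'⟩, hc, he, hac'⟩
      by_cases ha : a ∈ e
      · exact .inl ⟨⟨he, ha⟩, Ne.symm hb, Ne.symm hc⟩
      · exact .inr ⟨(Sym2.mem_and_mem_iff hbc).1 ⟨hab'.resolve_left ha, hac'.resolve_left ha⟩, he⟩
  have hsub : {s(a, b), s(a, c)} ⊆ G.incidenceFinset a := by
    simp [subset_iff, incidenceSet, hab, hac]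
  have hdisj : Disjoint (G.incidenceFinset a \ {s(a, b), s(a, c)}) ({s(b, c)} ∩ G.edgeFinset) := by
    simp only [disjoint_right, mem_inter, mem_singleton, mem_sdiff, mem_incidenceFinset]
    rintro e ⟨rfl, -⟩ ⟨⟨-, ha⟩, -⟩
    simp [hab.ne, hac.ne] at ha
  have hpair : #{s(a, b), s(a, c)} = 2 := card_pair (Sym2.congr_right.not.2 hbc)
  have hbc' : #({s(b, c)} ∩ G.edgeFinset) = if G.Adj b c then 1 else 0 := by
    split_ifs with hadj <;> simp [hadj]
  have hdeg := card_le_card hsub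
  rw [hpair, card_incidenceFinset_eq_degree] at hdeg
  rw [card_eq_card_of_forall_mem_iff _ hT, card_union_of_disjoint hdisj, card_sdiff_of_subset hsub,
    card_incidenceFinset_eq_degree, hpair, hbc']
  omega

lemma card_commonNeighbors_lineGraph_of_disjoint {a b c d : V} (hab : G.Adj a b) (hcd : G.Adj c d)
    (hac : a ≠ c) (had : a ≠ d) (hbc : b ≠ c) (hbd : b ≠ d) :
    Fintype.card (G.lineGraph.commonNeighbors ⟨s(a, b), hab⟩ ⟨s(c, d), hcd⟩) =
      #{e ∈ {s(a, c), s(a, d), s(b, c), s(b, d)} | e ∈ G.edgeSet} := by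
  refine card_eq_card_of_forall_mem_iff _ fun e => ?_
  simp only [mem_filter, mem_insert, mem_singleton, mem_commonNeighbors, lineGraph_adj_iff_exists,
    ne_eq, Subtype.ext_iff]
  constructor
  · rintro ⟨he | he | he | he, hE⟩ <;> subst he <;> refine ⟨hE, ?_⟩ <;>
      simp [hac, had, hbc, hbd, hac.symm, had.symm, hbc.symm, hbd.symm, hab.ne, hcd.ne]
  · rintro ⟨hE, ⟨-, v, hv, hve⟩, -, w, hw, hwe⟩
    have hvw : v ≠ w := by
      rcases Sym2.mem_iff.1 hv with rfl | rfl <;> rcases Sym2.mem_iff.1 hw with rfl | rfl <;>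
        assumption
    obtain rfl := (Sym2.mem_and_mem_iff hvw).1 ⟨hve, hwe⟩
    refine ⟨?_, hE⟩
    rcases Sym2.mem_iff.1 hv with rfl | rfl <;> rcases Sym2.mem_iff.1 hw with rfl | rfl <;> simp

end Counting

lemma exists_eq_mk_of_not_lineGraph_adj {ε₁ ε₂ : G.edgeSet} (hne : ε₁ ≠ ε₂)
    (h : ¬G.lineGraph.Adj ε₁ ε₂) :
    ∃ a b c d, ∃ (hab : G.Adj a b) (hcd : G.Adj c d), ε₁ = ⟨s(a, b), hab⟩ ∧
      ε₂ = ⟨s(c, d), hcd⟩ ∧ a ≠ c ∧ a ≠ d ∧ b ≠ c ∧ b ≠ d := by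
  obtain ⟨e₁, he₁⟩ := ε₁
  obtain ⟨e₂, he₂⟩ := ε₂
  induction e₁ using Sym2.ind with | _ a b => ?_
  induction e₂ using Sym2.ind with | _ c d => ?_
  simp only [lineGraph_adj_iff_exists, not_and, not_exists] at h
  have h := h hne
  refine ⟨a, b, c, d, he₁, he₂, rfl, rfl, ?_, ?_, ?_, ?_⟩ <;> rintro rfl <;> simp at h

lemma exists_adj_adj_of_lineGraph_ne_top (h : G.lineGraph ≠ ⊤) :
    ∃ a b c d, G.Adj a b ∧ G.Adj c d ∧ a ≠ c ∧ a ≠ d ∧ b ≠ c ∧ b ≠ d := by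
  obtain ⟨ε₁, ε₂, hne, hnadj⟩ := ne_top_iff_exists_not_adj.1 h
  obtain ⟨a, b, c, d, hab, hcd, -, -, hdisj⟩ := exists_eq_mk_of_not_lineGraph_adj hne hnadj
  exact ⟨a, b, c, d, hab, hcd, hdisj⟩

def IsDominatingClique (H : SimpleGraph W) (C : Set W) : Prop :=
  H.IsClique C ∧ ∀ x ∉ C, ∃ y ∈ C, H.Adj x y

lemma _root_.IsRegularCliqueWith.isDominatingClique [Fintype W] {H : SimpleGraph W}
    {D : Finset W} {e : ℕ} (hD : IsRegularCliqueWith H D e) : H.IsDominatingClique D := by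
  refine ⟨hD.1, fun x hx => ?_⟩
  obtain ⟨y, hy⟩ := card_pos.1 (hD.2.2 x hx ▸ hD.2.1)
  exact ⟨y, (mem_filter.1 hy).1, (mem_filter.1 hy).2⟩

namespace IsDominatingClique

variable {C : Set G.edgeSet} (hC : G.lineGraph.IsDominatingClique C)
include hC

lemma exists_mem_mem {γ₁ γ₂ : G.edgeSet} (hγ₁ : γ₁ ∈ C) (hγ₂ : γ₂ ∈ C) :
    ∃ v, v ∈ (γ₁ : Sym2 V) ∧ v ∈ (γ₂ : Sym2 V) := by
  obtain rfl | hne := eq_or_ne γ₁ γ₂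
  · exact ⟨_, Sym2.out_fst_mem _, Sym2.out_fst_mem _⟩
  · exact (lineGraph_adj_iff_exists.1 (hC.1 hγ₁ hγ₂ hne)).2

lemma exists_mem_or_mem {a b : V} (hab : G.Adj a b) :
    ∃ γ ∈ C, a ∈ (γ : Sym2 V) ∨ b ∈ (γ : Sym2 V) := by
  by_cases hmem : ⟨s(a, b), hab⟩ ∈ C
  · exact ⟨_, hmem, .inl (Sym2.mem_mk_left a b)⟩
  obtain ⟨γ, hγ, hadj⟩ := hC.2 _ hmem
  obtain ⟨-, v, hv, hvγ⟩ := lineGraph_adj_iff_exists.1 hadj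
  rcases Sym2.mem_iff.1 hv with rfl | rfl
  exacts [⟨γ, hγ, .inl hvγ⟩, ⟨γ, hγ, .inr hvγ⟩]

lemma mem_of_adj_of_closed {S : Set V} (hS : ∀ a b, a ∈ S → G.Adj a b → b ∈ S) {a b : V}
    (hab : G.Adj a b) (ha : a ∈ S) {x y : V} (hxy : G.Adj x y) : x ∈ S := by
  have hfill : ∀ γ : G.edgeSet, ∀ v ∈ (γ : Sym2 V), v ∈ S → ∀ w ∈ (γ : Sym2 V), w ∈ S :=
    fun γ v hv hvS w hw => (eq_or_ne v w).elim (· ▸ hvS) fun hvw =>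
      hS v w hvS (G.adj_iff_exists_edge.2 ⟨hvw, γ, γ.2, hv, hw⟩)
  obtain ⟨γ, hγ, hγab⟩ := hC.exists_mem_or_mem hab
  have hγS : ∀ w ∈ (γ : Sym2 V), w ∈ S := by
    rcases hγab with h | h
    exacts [hfill γ a h ha, hfill γ b h (hS a b ha hab)]
  have hCS : ∀ γ' ∈ C, ∀ w ∈ (γ' : Sym2 V), w ∈ S := fun γ' hγ' => by
    obtain ⟨v, hv, hv'⟩ := hC.exists_mem_mem hγ hγ'
    exact hfill γ' v hv' (hγS v hv)
  obtain ⟨γ', hγ', h | h⟩ := hC.exists_mem_or_mem hxy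
  exacts [hCS γ' hγ' x h, hS y x (hCS γ' hγ' y h) hxy.symm]

lemma exists_forall_mem_of_triangleFree (htf : ∀ a b c, G.Adj a b → G.Adj b c → ¬G.Adj a c)
    (hne : C.Nonempty) : ∃ u, ∀ γ ∈ C, u ∈ (γ : Sym2 V) := by
  obtain ⟨⟨e₀, he₀⟩, hγ₀⟩ := hne
  induction e₀ using Sym2.ind with | _ p q => ?_
  by_cases hp : ∀ γ ∈ C, p ∈ (γ : Sym2 V)
  · exact ⟨p, hp⟩
  push Not at hp
  obtain ⟨γ₁, hγ₁, hpγ₁⟩ := hp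
  obtain ⟨r, hr⟩ : ∃ r, (γ₁ : Sym2 V) = s(q, r) := by
    obtain ⟨v, hv₀, hv₁⟩ := hC.exists_mem_mem hγ₀ hγ₁
    rcases Sym2.mem_iff.1 hv₀ with rfl | rfl
    exacts [absurd hv₁ hpγ₁, Sym2.mem_iff_exists.1 hv₁]
  refine ⟨q, fun γ hγ => by_contra fun hqγ => ?_⟩
  -- otherwise `γ` meets `pq` in `p` and `qr` in `r`, so `γ = pr` closes a triangle
  obtain ⟨v, hv₀, hv⟩ := hC.exists_mem_mem hγ₀ hγ
  obtain ⟨w, hw₁, hw⟩ := hC.exists_mem_mem hγ₁ hγ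
  rw [hr] at hw₁ hpγ₁
  obtain rfl : v = p := (Sym2.mem_iff.1 hv₀).resolve_right (by rintro rfl; exact hqγ hv)
  obtain rfl : w = r := (Sym2.mem_iff.1 hw₁).resolve_left (by rintro rfl; exact hqγ hw)
  have hqw : G.Adj q w := by simpa [hr] using γ₁.2
  have hvw : v ≠ w := by rintro rfl; exact hpγ₁ (Sym2.mem_mk_right q v)
  exact htf v q w he₀ hqw (G.adj_iff_exists_edge.2 ⟨hvw, γ, γ.2, hv, hw⟩)

lemma adj_or_adj_of_forall_mem {u : V} (hu : ∀ γ ∈ C, u ∈ (γ : Sym2 V)) {a b : V}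
    (hab : G.Adj a b) : G.Adj u a ∨ G.Adj u b := by
  obtain ⟨γ, hγ, h⟩ := hC.exists_mem_or_mem hab
  have key : ∀ x ∈ (γ : Sym2 V), x = u ∨ G.Adj u x := fun x hx => (eq_or_ne x u).imp_right
    fun hxu => G.adj_iff_exists_edge.2 ⟨hxu.symm, γ, γ.2, hu γ hγ, hx⟩
  rcases h with h | h <;> rcases key _ h with rfl | h
  exacts [.inr hab, .inl h, .inl hab.symm, .inr h]

end IsDominatingClique

def IsCompleteOn (G : SimpleGraph V) (S : Finset V) : Prop :=
  ∀ a b, G.Adj a b ↔ a ≠ b ∧ a ∈ S ∧ b ∈ S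

def IsCompleteBipartiteOn (G : SimpleGraph V) (P Q : Finset V) : Prop :=
  Disjoint P Q ∧ ∀ a b, G.Adj a b ↔ a ∈ P ∧ b ∈ Q ∨ a ∈ Q ∧ b ∈ P

lemma exists_isCompleteBipartiteOn_of_degree_eq [Fintype V] {d : ℕ} {u t : V}
    (htf : ∀ a b c, G.Adj a b → G.Adj b c → ¬G.Adj a c)
    (hdeg : ∀ v w, G.Adj v w → G.degree v = d)
    (hcover : ∀ a b, G.Adj a b → G.Adj u a ∨ G.Adj u b) (hut : G.Adj u t) :
    ∃ P Q : Finset V, #P = d ∧ #Q = d ∧ G.IsCompleteBipartiteOn P Q := by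
  set P := G.neighborFinset u
  set Q := ({v | (∃ w, G.Adj v w) ∧ ¬G.Adj u v} : Finset V)
  have hP : #P = d := by rw [card_neighborFinset_eq_degree, hdeg u t hut]
  have hNQ : ∀ q ∈ Q, G.neighborFinset q = P := by
    intro q hq
    obtain ⟨⟨w, hqw⟩, huq⟩ := (mem_filter.1 hq).2
    refine eq_of_subset_of_card_le (fun v hv => ?_) ?_
    · rw [mem_neighborFinset] at hv ⊢
      exact (hcover q v hv).resolve_left huq
    · rw [hP, card_neighborFinset_eq_degree, hdeg q w hqw]
  have hNP : ∀ a ∈ P, G.neighborFinset a = Q := by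
    intro a ha
    ext v
    have hva : v ∈ Q → G.Adj v a := fun hv => (G.mem_neighborFinset v a).1 (hNQ v hv ▸ ha)
    simp only [P, Q, mem_neighborFinset, mem_filter, mem_univ, true_and] at ha hva ⊢
    exact ⟨fun hav => ⟨⟨a, hav.symm⟩, fun huv => htf u a v ha hav huv⟩, fun hv => (hva hv).symm⟩
  have htP : t ∈ P := (G.mem_neighborFinset u t).2 hut
  have hPQ : Disjoint P Q := by
    refine Finset.disjoint_left.2 fun a ha haQ => ?_
    exact (mem_filter.1 haQ).2.2 ((G.mem_neighborFinset u a).1 ha)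
  refine ⟨P, Q, hP, ?_, hPQ, fun a b => ⟨fun hab => ?_, ?_⟩⟩
  · rw [← hNP t htP, card_neighborFinset_eq_degree, hdeg t u hut.symm]
  · rcases hcover a b hab with ha | hb
    · have ha : a ∈ P := (G.mem_neighborFinset u a).2 ha
      exact .inl ⟨ha, hNP a ha ▸ (G.mem_neighborFinset a b).2 hab⟩
    · have hb : b ∈ P := (G.mem_neighborFinset u b).2 hb
      exact .inr ⟨hNP b hb ▸ (G.mem_neighborFinset b a).2 hab.symm, hb⟩
  · rintro (⟨ha, hb⟩ | ⟨ha, hb⟩)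
    · exact (G.mem_neighborFinset a b).1 (hNP a ha ▸ hb)
    · exact (G.mem_neighborFinset b a).1 (hNP b hb ▸ ha) |>.symm

section EdgeRegularLineGraph

variable [Fintype V] {n k l : ℕ}

lemma degree_add_degree_of_isEdgeRegular (h : IsEdgeRegular G.lineGraph n k l) {a b : V}
    (hab : G.Adj a b) : G.degree a + G.degree b = k + 2 := by
  rw [← lineGraph_degree_add_two hab, h.2.1]

lemma degree_add_ite_of_isEdgeRegular (h : IsEdgeRegular G.lineGraph n k l) {u p q : V}
    (hp : G.Adj u p) (hq : G.Adj u q) (hpq : p ≠ q) :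
    G.degree u + (if G.Adj p q then 1 else 0) = l + 2 := by
  rw [← card_commonNeighbors_lineGraph_of_adj hp hq hpq, h.2.2]
  rw [lineGraph_adj_iff_exists]
  exact ⟨fun h => hpq (Sym2.congr_right.1 (congrArg Subtype.val h)), u, Sym2.mem_mk_left _ _,
    Sym2.mem_mk_left _ _⟩

lemma degree_eq_of_isEdgeRegular_of_triangleFree (h : IsEdgeRegular G.lineGraph n k l)
    (htf : ∀ a b c, G.Adj a b → G.Adj b c → ¬G.Adj a c) {u p q x y : V}
    (hcover : ∀ a b, G.Adj a b → G.Adj u a ∨ G.Adj u b)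
    (hp : G.Adj u p) (hq : G.Adj u q) (hpq : p ≠ q) (hxy : G.Adj x y) (hux : u ≠ x) (huy : u ≠ y)
    {v w : V} (hvw : G.Adj v w) : G.degree v = l + 2 := by
  have hdeg : ∀ {v p q}, G.Adj v p → G.Adj v q → p ≠ q → G.degree v = l + 2 := by
    intro v p q hp hq hpq
    simpa [htf p v q hp.symm hq] using degree_add_ite_of_isEdgeRegular h hp hq hpq
  have hsum := fun {a b} (hab : G.Adj a b) => degree_add_degree_of_isEdgeRegular h hab
  have hu := hdeg hp hq hpq
  -- the end of `xy` adjacent to `u` has two neighbours, which pins down `k`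
  have hk : k + 2 = 2 * (l + 2) := by
    rcases hcover x y hxy with hx | hy
    · have := hdeg hx.symm hxy huy
      have := hsum hx
      omega
    · have := hdeg hy.symm hxy.symm hux
      have := hsum hy
      omega
  rcases hcover v w hvw with hv | hw
  · have := hsum hv
    omega
  · have := hsum hw
    have := hsum hvw
    omega

lemma exists_closed_clique_of_isEdgeRegular (h : IsEdgeRegular G.lineGraph n k l) {x y z : V}
    (hxy : G.Adj x y) (hyz : G.Adj y z) (hxz : G.Adj x z) :
    ∃ S : Finset V, x ∈ S ∧ (∀ a b, a ∈ S → G.Adj a b → b ∈ S) ∧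
      ∀ a ∈ S, ∀ b ∈ S, a ≠ b → G.Adj a b := by
  have hK : ∀ {v p q}, G.Adj v p → G.Adj v q → p ≠ q → (G.Adj p q ↔ G.degree v = l + 1) := by
    intro v p q hp hq hpq
    have := degree_add_ite_of_isEdgeRegular h hp hq hpq
    split_ifs at this with hadj <;> simp only [hadj, true_iff, false_iff] <;> omega
  have hx : G.degree x = l + 1 := (hK hxy hxz hyz.ne).1 hyz
  have hNx : ∀ {p q}, G.Adj x p → G.Adj x q → p ≠ q → G.Adj p q := fun hp hq hpq =>
    (hK hp hq hpq).2 hx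
  refine ⟨insert x (G.neighborFinset x), mem_insert_self _ _, ?_, ?_⟩
  · simp only [mem_insert, mem_neighborFinset]
    rintro a b (rfl | hxa) hab
    · exact .inr hab
    obtain rfl | hbx := eq_or_ne b x
    · exact .inl rfl
    obtain ⟨a', hxa', ha'a⟩ : ∃ a', G.Adj x a' ∧ a' ≠ a :=
      if hya : y = a then ⟨z, hxz, fun hza => hyz.ne (hya.trans hza.symm)⟩ else ⟨y, hxy, hya⟩
    have ha : G.degree a = l + 1 := (hK hxa.symm (hNx hxa hxa' ha'a.symm) hxa'.ne).1 hxa'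
    exact .inr ((hK hxa.symm hab hbx.symm).2 ha)
  · simp only [mem_insert, mem_neighborFinset]
    rintro a (rfl | hxa) b (rfl | hxb) hab
    exacts [absurd rfl hab, hxb, hxa.symm, hNx hxa hxb hab]

variable {C : Set G.edgeSet}

lemma exists_isCompleteOn_of_isEdgeRegular (h : IsEdgeRegular G.lineGraph n k l)
    (hTop : G.lineGraph ≠ ⊤) (hC : G.lineGraph.IsDominatingClique C) {x y z : V}
    (hxy : G.Adj x y) (hyz : G.Adj y z) (hxz : G.Adj x z) :
    ∃ S : Finset V, 4 ≤ #S ∧ G.IsCompleteOn S := by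
  obtain ⟨S, hxS, hclosed, hclique⟩ := exists_closed_clique_of_isEdgeRegular h hxy hyz hxz
  have hS : ∀ {a b}, G.Adj a b → a ∈ S := fun hab =>
    hC.mem_of_adj_of_closed (S := S) hclosed hxy hxS hab
  refine ⟨S, ?_, fun u v => ⟨fun huv => ⟨huv.ne, hS huv, hS huv.symm⟩,
    fun ⟨hne, hu, hv⟩ => hclique u hu v hv hne⟩⟩
  obtain ⟨a, b, c, d, hab, hcd, hac, had, hbc, hbd⟩ := exists_adj_adj_of_lineGraph_ne_top hTop
  calc 4 = #{a, b, c, d} := by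
        rw [card_insert_of_notMem (by simp [hab.ne, hac, had]),
          card_insert_of_notMem (by simp [hbc, hbd]), card_pair hcd.ne]
    _ ≤ #S := card_le_card (by
        simp only [insert_subset_iff, singleton_subset_iff]
        exact ⟨hS hab, hS hab.symm, hS hcd, hS hcd.symm⟩)

lemma exists_isCompleteBipartiteOn_of_isEdgeRegular (h : IsEdgeRegular G.lineGraph n k l)
    (hTop : G.lineGraph ≠ ⊤) (hC : G.lineGraph.IsDominatingClique C)
    (htf : ∀ a b c, G.Adj a b → G.Adj b c → ¬G.Adj a c) :
    ∃ P Q : Finset V, 2 ≤ #P ∧ #P = #Q ∧ G.IsCompleteBipartiteOn P Q := by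
  obtain ⟨a, b, c, d, hab, hcd, hac, had, hbc, hbd⟩ := exists_adj_adj_of_lineGraph_ne_top hTop
  obtain ⟨γ, hγ, -⟩ := hC.exists_mem_or_mem hab
  obtain ⟨u, hu⟩ := hC.exists_forall_mem_of_triangleFree htf ⟨γ, hγ⟩
  have hcover : ∀ a b, G.Adj a b → G.Adj u a ∨ G.Adj u b := fun _ _ =>
    hC.adj_or_adj_of_forall_mem hu
  obtain ⟨p, hup, hp⟩ : ∃ p, G.Adj u p ∧ (p = a ∨ p = b) :=
    (hcover a b hab).elim (⟨a, ·, .inl rfl⟩) (⟨b, ·, .inr rfl⟩)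
  obtain ⟨q, huq, hq⟩ : ∃ q, G.Adj u q ∧ (q = c ∨ q = d) :=
    (hcover c d hcd).elim (⟨c, ·, .inl rfl⟩) (⟨d, ·, .inr rfl⟩)
  have hpq : p ≠ q := by rcases hp with rfl | rfl <;> rcases hq with rfl | rfl <;> assumption
  obtain ⟨x, y, hxy, hux, huy⟩ : ∃ x y, G.Adj x y ∧ u ≠ x ∧ u ≠ y := by
    by_cases huab : u = a ∨ u = b
    · exact ⟨c, d, hcd, by rcases huab with rfl | rfl <;> assumption,
        by rcases huab with rfl | rfl <;> assumption⟩
    · push Not at huab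
      exact ⟨a, b, hab, huab.1, huab.2⟩
  have hdeg : ∀ v w, G.Adj v w → G.degree v = l + 2 := fun _ _ =>
    degree_eq_of_isEdgeRegular_of_triangleFree h htf hcover hup huq hpq hxy hux huy
  obtain ⟨P, Q, hP, hQ, hPQ⟩ := exists_isCompleteBipartiteOn_of_degree_eq htf hdeg hcover hup
  exact ⟨P, Q, by omega, by omega, hPQ⟩

end EdgeRegularLineGraph

lemma nonempty_lineGraph_iso_induce {s : Set V} (hs : ∀ a b, G.Adj a b → a ∈ s) :
    Nonempty (G.lineGraph ≃g (G.induce s).lineGraph) := by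
  refine ⟨(RelIso.ofSurjective (Embedding.induce s).toCopy.toLineGraphEmbedding ?_).symm⟩
  rintro ⟨e, he⟩
  induction e using Sym2.ind with | _ a b => ?_
  exact ⟨⟨s(⟨a, hs a b he⟩, ⟨b, hs b a he.symm⟩), he⟩, rfl⟩

lemma IsCompleteOn.nonempty_lineGraph_iso {S : Finset V} {m : ℕ} (hS : G.IsCompleteOn S)
    (hm : #S = m) : Nonempty (G.lineGraph ≃g (⊤ : SimpleGraph (Fin m)).lineGraph) := by
  obtain ⟨φ⟩ := nonempty_lineGraph_iso_induce (s := S) fun a b hab => ((hS a b).1 hab).2.1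
  let ψ : G.induce (S : Set V) ≃g (⊤ : SimpleGraph (Fin m)) :=
    { toEquiv := S.equivFin.trans (finCongr hm)
      map_rel_iff' := by simp [hS _ _] }
  exact ⟨φ.trans ψ.lineGraph⟩

lemma IsCompleteBipartiteOn.nonempty_lineGraph_iso {P Q : Finset V} {m : ℕ}
    (h : G.IsCompleteBipartiteOn P Q) (hP : #P = m) (hQ : #Q = m) :
    Nonempty (G.lineGraph ≃g (completeBipartiteGraph (Fin m) (Fin m)).lineGraph) := by
  obtain ⟨φ⟩ := nonempty_lineGraph_iso_induce (s := (P : Set V) ∪ Q) fun a b hab => by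
    rcases (h.2 a b).1 hab with ⟨ha, -⟩ | ⟨ha, -⟩
    exacts [.inl ha, .inr ha]
  have hdisj : Disjoint (P : Set V) Q := Finset.disjoint_coe.2 h.1
  let ψ : completeBipartiteGraph (P : Set V) (Q : Set V) ≃g G.induce (P ∪ Q : Set V) :=
    { toEquiv := (Equiv.Set.union hdisj).symm
      map_rel_iff' := by
        rintro (⟨a, ha⟩ | ⟨a, ha⟩) (⟨b, hb⟩ | ⟨b, hb⟩) <;>
          simp only [Equiv.Set.union_symm_apply_left hdisj, Equiv.Set.union_symm_apply_right hdisj]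
        all_goals simp [h.2 _ _, Finset.mem_coe.1 ha, Finset.mem_coe.1 hb,
          Finset.disjoint_left.1 h.1, Finset.disjoint_right.1 h.1] }
  exact ⟨φ.trans (Iso.lineGraph (ψ.symm.trans (completeBipartiteGraphCongr
    (P.equivFin.trans (finCongr hP)) (Q.equivFin.trans (finCongr hQ)))))⟩

section StronglyRegular

variable [Fintype V] {n k l : ℕ}

lemma IsCompleteOn.isSRGWith_lineGraph {S : Finset V} (hS : G.IsCompleteOn S)
    (h : IsEdgeRegular G.lineGraph n k l) : G.lineGraph.IsSRGWith n k l 4 := by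
  refine ⟨h.1, h.2.1, h.2.2, fun ε₁ ε₂ hne hnadj => ?_⟩
  obtain ⟨a, b, c, d, hab, hcd, rfl, rfl, hac, had, hbc, hbd⟩ :=
    exists_eq_mk_of_not_lineGraph_adj hne hnadj
  obtain ⟨-, ha, hb⟩ := (hS a b).1 hab
  obtain ⟨-, hc, hd⟩ := (hS c d).1 hcd
  rw [card_commonNeighbors_lineGraph_of_disjoint hab hcd hac had hbc hbd, filter_true_of_mem]
  · rw [card_insert_of_notMem, card_insert_of_notMem, card_pair] <;>
      simp [hab.ne, hcd.ne, hac, had, hbd]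
  · simp [hS _ _, ha, hb, hc, hd, hac, had, hbc, hbd]

lemma IsCompleteBipartiteOn.isSRGWith_lineGraph {P Q : Finset V}
    (hPQ : G.IsCompleteBipartiteOn P Q) (h : IsEdgeRegular G.lineGraph n k l) :
    G.lineGraph.IsSRGWith n k l 2 := by
  refine ⟨h.1, h.2.1, h.2.2, fun ε₁ ε₂ hne hnadj => ?_⟩
  obtain ⟨a, b, c, d, hab, hcd, rfl, rfl, hac, had, hbc, hbd⟩ :=
    exists_eq_mk_of_not_lineGraph_adj hne hnadj
  have hP := Finset.disjoint_left.1 hPQ.1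
  have hQ := Finset.disjoint_right.1 hPQ.1
  rw [card_commonNeighbors_lineGraph_of_disjoint hab hcd hac had hbc hbd]
  rcases (hPQ.2 a b).1 hab with ⟨ha, hb⟩ | ⟨ha, hb⟩ <;>
    rcases (hPQ.2 c d).1 hcd with ⟨hc, hd⟩ | ⟨hc, hd⟩ <;>
    simp only [filter_insert, filter_singleton, mem_edgeSet, hPQ.2 _ _, ha, hb, hc, hd, hP _,
      hQ _, and_true, and_false, or_false, false_or, if_true, if_false] <;>
    exact card_pair (by simp [hab.ne, hac, had])

end StronglyRegular

end SimpleGraph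

open SimpleGraph Finset

/-- If the line graph `L(G)` of a graph `G` is a Neumaier graph, then `L(G)`
is isomorphic to an `(s+1) × (s+1)` rook graph (the line graph of `K_{s+1,s+1}`), to a Johnson
graph `J(s+2, 2)` (the line graph of `K_{s+2}`) with `s ≥ 2`, or to the octahedral graph
`K_{2,2,2}`; in particular, `L(G)` is strongly regular. -/
theorem stmt17 [Fintype V] (G : SimpleGraph V)
    (hN : IsNeumaier G.lineGraph) :
    ((∃ s : ℕ, 0 < s ∧ Nonempty
        (G.lineGraph ≃g (completeBipartiteGraph (Fin (s + 1)) (Fin (s + 1))).lineGraph)) ∨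
     (∃ s : ℕ, 2 ≤ s ∧ Nonempty
        (G.lineGraph ≃g (⊤ : SimpleGraph (Fin (s + 2))).lineGraph)) ∨
     Nonempty (G.lineGraph ≃g SimpleGraph.completeMultipartiteGraph (fun _ : Fin 3 => Fin 2))) ∧
    ∃ n k l m : ℕ, G.lineGraph.IsSRGWith n k l m := by
  obtain ⟨⟨n, k, l, h⟩, hTop, D, e, hD⟩ := hN
  have hC := hD.isDominatingClique
  by_cases htri : ∃ x y z, G.Adj x y ∧ G.Adj y z ∧ G.Adj x z
  · obtain ⟨x, y, z, hxy, hyz, hxz⟩ := htri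
    obtain ⟨S, hS4, hS⟩ := exists_isCompleteOn_of_isEdgeRegular h hTop hC hxy hyz hxz
    exact ⟨.inr (.inl ⟨#S - 2, by omega, hS.nonempty_lineGraph_iso (by omega)⟩),
      n, k, l, 4, hS.isSRGWith_lineGraph h⟩
  · push Not at htri
    obtain ⟨P, Q, hP, hPQ, hB⟩ := exists_isCompleteBipartiteOn_of_isEdgeRegular h hTop hC htri
    exact ⟨.inl ⟨#P - 1, by omega, hB.nonempty_lineGraph_iso (by omega) (by omega)⟩,
      n, k, l, 2, hB.isSRGWith_lineGraph h⟩
end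

section
/- There is no Neumaier graph whose adjacency matrix has exactly four distinct real eigenvalues; that is, if Γ is a Neumaier graph, then the set of real eigenvalues of its adjacency matrix does not have cardinality 4. -/
open scoped Classical
open Matrix

variable {V : Type*}

/-! Suppose the eigenvalues are `k, θ₁, θ₂, θ₃`, where `k` is the degree. The regular clique makes
the graph connected, so the `k`-eigenspace consists of the constant vectors. Therefore
`(A - θ₁)(A - θ₂)(A - θ₃)` is a constant matrix, and since `A²` equals `λ` on edges, `A³` takes a
constant value `T` on edges. Fix a vertex `x` and let `m z` be the number of common neighbours of
`x` and a non-neighbour `z`. Then `∑ m z = k (k - 1 - λ)` and `∑ (m z)² = k (T - k - λ²)`.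
Double counting over the clique shows that these sums attain equality in the Cauchy–Schwarz
inequality. So `m` is constant and the graph is strongly regular. But a strongly regular graph
has at most two eigenvalues other than `k`. -/

open Finset SimpleGraph Polynomial

lemma Matrix.IsHermitian.aeval_eq_zero {𝕜 n : Type*} [RCLike 𝕜] [Fintype n] [DecidableEq n]
    {A : Matrix n n 𝕜} (hA : A.IsHermitian) {p : ℝ[X]}
    (hp : ∀ i, p.IsRoot (hA.eigenvalues i)) : aeval A p = 0 := by
  rw [← cfc_polynomial p A hA.isSelfAdjoint, ← cfc_zero ℝ A]
  refine cfc_congr fun μ hμ => ?_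
  rw [hA.spectrum_real_eq_range_eigenvalues] at hμ
  obtain ⟨i, rfl⟩ := hμ
  exact hp i

lemma Matrix.IsHermitian.aeval {𝕜 n : Type*} [RCLike 𝕜] [Fintype n] [DecidableEq n]
    {A : Matrix n n 𝕜} (hA : A.IsHermitian) (p : ℝ[X]) : (aeval A p).IsHermitian := by
  rw [← cfc_polynomial p A hA.isSelfAdjoint]
  exact cfc_predicate (R := ℝ) _ A

lemma Finset.card_mul_eq_sum_of_card_mul_sum_sq_eq {ι : Type*} {s : Finset ι} {f : ι → ℝ}
    (h : #s * ∑ i ∈ s, f i ^ 2 = (∑ i ∈ s, f i) ^ 2) {i : ι} (hi : i ∈ s) :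
    #s * f i = ∑ j ∈ s, f j := by
  have hvar : ∑ j ∈ s, (#s * f j - ∑ j ∈ s, f j) ^ 2 = 0 := by
    simp only [sub_sq, sum_add_distrib, sum_sub_distrib, mul_pow, ← mul_sum, ← sum_mul,
      sum_const, nsmul_eq_mul]
    linear_combination (#s : ℝ) * h
  have := (sum_eq_zero_iff_of_nonneg fun j _ => sq_nonneg _).1 hvar i hi
  linarith [pow_eq_zero_iff two_ne_zero |>.1 this]

lemma eq_of_sq_eq_mul_add_of_ne {a b x y z : ℝ} (hx : x ^ 2 = a * x + b)
    (hy : y ^ 2 = a * y + b) (hz : z ^ 2 = a * z + b) (hxy : x ≠ y) (hxz : x ≠ z) : y = z := by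
  have hy' : x + y = a := mul_left_cancel₀ (sub_ne_zero.2 hxy) (by linear_combination hx - hy)
  have hz' : x + z = a := mul_left_cancel₀ (sub_ne_zero.2 hxz) (by linear_combination hx - hz)
  linarith

namespace SimpleGraph

variable [Fintype V] {G : SimpleGraph V} {k l : ℕ}

lemma sum_eq_add_sum_neighborFinset_add_sum_compl {M : Type*} [AddCommMonoid M] (x : V)
    (f : V → M) :
    ∑ z, f z = f x + ∑ z ∈ G.neighborFinset x, f z + ∑ z ∈ Gᶜ.neighborFinset x, f z := by
  have hcompl : (G.neighborFinset x)ᶜ = insert x (Gᶜ.neighborFinset x) := by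
    ext z
    by_cases hz : z = x
    · simp [hz]
    · simp [hz, Ne.symm hz]
  rw [← sum_add_sum_compl (G.neighborFinset x), hcompl, sum_insert (by simp)]
  abel

lemma sum_neighborFinset_eq_of_adj {M : Type*} [AddCommMonoid M] {x y : V} (hxy : G.Adj x y)
    (f : V → M) :
    ∑ u ∈ G.neighborFinset y, f u = f x + ∑ u ∈ G.neighborFinset x ∩ G.neighborFinset y, f u
      + ∑ u ∈ Gᶜ.neighborFinset x ∩ G.neighborFinset y, f u := by
  have := sum_eq_add_sum_neighborFinset_add_sum_compl (G := G) x
    (fun u => if u ∈ G.neighborFinset y then f u else 0)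
  rwa [sum_ite_mem, sum_ite_mem, sum_ite_mem, univ_inter,
    if_pos (mem_neighborFinset _ _ _ |>.2 hxy.symm)] at this

lemma card_commonNeighbors_eq (x y : V) :
    Fintype.card (G.commonNeighbors x y) = #(G.neighborFinset x ∩ G.neighborFinset y) := by
  rw [← Set.toFinset_card]
  congr 1
  ext z
  simp [mem_commonNeighbors]

lemma adjMatrix_sq_apply (x y : V) :
    (G.adjMatrix ℝ ^ 2) x y = #(G.neighborFinset x ∩ G.neighborFinset y) := by
  rw [sq, adjMatrix_mul_apply]
  simp only [adjMatrix_apply, sum_boole, Nat.cast_inj]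
  congr 1
  ext u
  simp [adj_comm]

lemma IsRegularOfDegree.card_compl_neighborFinset (hreg : G.IsRegularOfDegree k) (x : V) :
    (#(Gᶜ.neighborFinset x) : ℝ) = Fintype.card V - 1 - k := by
  have := sum_eq_add_sum_neighborFinset_add_sum_compl (G := G) x (fun _ => (1 : ℝ))
  simp only [sum_const, card_univ, nsmul_eq_mul, mul_one, card_neighborFinset_eq_degree,
    hreg x] at this ⊢
  linarith

lemma IsRegularOfDegree.sum_adjMatrix_pow_apply (hreg : G.IsRegularOfDegree k) (n : ℕ)
    (x : V) : ∑ z, (G.adjMatrix ℝ ^ n) x z = (k : ℝ) ^ n := by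
  induction n generalizing x with
  | zero => simp [Matrix.one_apply]
  | succ n ih =>
    simp_rw [pow_succ', adjMatrix_mul_apply]
    rw [sum_comm]
    simp [ih, ← pow_succ', hreg x]

lemma IsRegularOfDegree.sum_adjMatrix_mulVec (hreg : G.IsRegularOfDegree k) (f : V → ℝ) :
    ∑ x, (G.adjMatrix ℝ *ᵥ f) x = k * ∑ x, f x := by
  have := dotProduct_mulVec (Function.const V (1 : ℝ)) (G.adjMatrix ℝ) f
  simp only [dotProduct, Function.const_apply, one_mul] at this
  rw [this]
  simp [hreg _, mul_sum]

lemma IsRegularOfDegree.isAdjEigenvalue [Nonempty V] (hreg : G.IsRegularOfDegree k) :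
    IsAdjEigenvalue G k :=
  ⟨fun _ => 1, Function.ne_iff.2 ⟨Classical.arbitrary V, one_ne_zero⟩, by ext x; simp [hreg x]⟩

lemma IsRegularOfDegree.apply_eq_of_reachable (hreg : G.IsRegularOfDegree k) {f : V → ℝ}
    (hf : G.adjMatrix ℝ *ᵥ f = (k : ℝ) • f) {i j : V} (hij : G.Reachable i j) : f i = f j := by
  refine lapMatrix_mulVec_eq_zero_iff_forall_reachable G |>.mp ?_ i j hij
  ext v
  simp [lapMatrix, sub_mulVec, degMatrix_mulVec_apply, hf, hreg v]

lemma isAdjEigenvalue_eigenvalues (i : V) :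
    IsAdjEigenvalue G ((G.isHermitian_adjMatrix ℝ).eigenvalues i) :=
  ⟨_, fun h => (G.isHermitian_adjMatrix ℝ).eigenvectorBasis.orthonormal.ne_zero i
      (by ext j; exact congrFun h j), (G.isHermitian_adjMatrix ℝ).mulVec_eigenvectorBasis i⟩

/-- `A * q(A) = k • q(A)`, so the columns of the symmetric matrix `q(A)` are constant. -/
lemma Preconnected.aeval_adjMatrix_apply_eq (hconn : G.Preconnected)
    (hreg : G.IsRegularOfDegree k) {q : ℝ[X]}
    (hq : ∀ θ, IsAdjEigenvalue G θ → θ ≠ k → q.IsRoot θ) (i j i' j' : V) :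
    aeval (G.adjMatrix ℝ) q i j = aeval (G.adjMatrix ℝ) q i' j' := by
  set M := aeval (G.adjMatrix ℝ) q
  have hAM : G.adjMatrix ℝ * M = (k : ℝ) • M := by
    have := (G.isHermitian_adjMatrix ℝ).aeval_eq_zero (p := (X - C (k : ℝ)) * q) fun i => by
      by_cases hi : (G.isHermitian_adjMatrix ℝ).eigenvalues i = k
      · simp [hi]
      · exact root_mul_left_of_isRoot _ (hq _ (isAdjEigenvalue_eigenvalues i) hi)
    rwa [map_mul, map_sub, aeval_X, aeval_C, Algebra.algebraMap_eq_smul_one, sub_mul,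
      smul_mul_assoc, one_mul, sub_eq_zero] at this
  have hcol (c : V) {a b : V} : M a c = M b c := by
    refine hreg.apply_eq_of_reachable (f := fun a => M a c) ?_ (hconn a b)
    ext a
    simpa [Matrix.mulVec, dotProduct, Matrix.mul_apply] using congrFun (congrFun hAM a) c
  have hsymm : M.IsSymm := isHermitian_iff_isSymm.1 ((G.isHermitian_adjMatrix ℝ).aeval q)
  calc M i j = M i' j := hcol j
    _ = M j i' := hsymm.apply j i'
    _ = M j' i' := hcol i'
    _ = M i' j' := hsymm.apply i' j'

lemma Preconnected.exists_adjMatrix_pow_three_eq_of_adj [Nonempty V] (hconn : G.Preconnected)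
    (hreg : G.IsRegularOfDegree k)
    (hl : ∀ x y, G.Adj x y → #(G.neighborFinset x ∩ G.neighborFinset y) = l) {θ₁ θ₂ θ₃ : ℝ}
    (hspec : ∀ θ, IsAdjEigenvalue G θ → θ ≠ k → θ = θ₁ ∨ θ = θ₂ ∨ θ = θ₃) :
    ∃ T : ℝ, ∀ x y, G.Adj x y → (G.adjMatrix ℝ ^ 3) x y = T := by
  set A := G.adjMatrix ℝ
  set q : ℝ[X] := (X - C θ₁) * (X - C θ₂) * (X - C θ₃)
  have hq (θ : ℝ) (hθ : IsAdjEigenvalue G θ) (hθk : θ ≠ k) : q.IsRoot θ := by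
    rcases hspec θ hθ hθk with rfl | rfl | rfl <;> simp [q]
  have haeval : aeval A q = A ^ 3 - (θ₁ + θ₂ + θ₃) • A ^ 2
      + (θ₁ * θ₂ + θ₁ * θ₃ + θ₂ * θ₃) • A - (θ₁ * θ₂ * θ₃) • 1 := by
    have : q = X ^ 3 - (θ₁ + θ₂ + θ₃) • X ^ 2 + (θ₁ * θ₂ + θ₁ * θ₃ + θ₂ * θ₃) • X
        - C (θ₁ * θ₂ * θ₃) := by
      simp only [q, smul_eq_C_mul, map_add, map_mul]
      ring
    simp only [this, map_sub, map_add, map_smul, map_pow, aeval_X, aeval_C,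
      Algebra.algebraMap_eq_smul_one]
  have hedge {x y : V} (hxy : G.Adj x y) : (A ^ 3) x y
      = aeval A q x y + (θ₁ + θ₂ + θ₃) * l - (θ₁ * θ₂ + θ₁ * θ₃ + θ₂ * θ₃) := by
    simp [haeval, A, adjMatrix_sq_apply, hl x y hxy, hxy, hxy.ne]
    ring
  obtain ⟨v⟩ := ‹Nonempty V›
  exact ⟨aeval A q v v + (θ₁ + θ₂ + θ₃) * l - (θ₁ * θ₂ + θ₁ * θ₃ + θ₂ * θ₃), fun x y hxy => by
    rw [hedge hxy, hconn.aeval_adjMatrix_apply_eq hreg hq x y v v]⟩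

lemma card_compl_neighborFinset_inter_of_adj (hreg : G.IsRegularOfDegree k)
    (hl : ∀ x y, G.Adj x y → #(G.neighborFinset x ∩ G.neighborFinset y) = l) {x y : V}
    (hxy : G.Adj x y) : (#(Gᶜ.neighborFinset x ∩ G.neighborFinset y) : ℝ) = k - 1 - l := by
  have := sum_neighborFinset_eq_of_adj hxy (fun _ => (1 : ℝ))
  simp only [sum_const, nsmul_eq_mul, mul_one, card_neighborFinset_eq_degree, hreg y,
    hl x y hxy] at this
  linarith

lemma sum_compl_neighborFinset_adjMatrix_sq (hreg : G.IsRegularOfDegree k)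
    (hl : ∀ x y, G.Adj x y → #(G.neighborFinset x ∩ G.neighborFinset y) = l) (x : V) :
    ∑ z ∈ Gᶜ.neighborFinset x, (G.adjMatrix ℝ ^ 2) x z = k * (k - 1 - l) := by
  have := sum_eq_add_sum_neighborFinset_add_sum_compl (G := G) x ((G.adjMatrix ℝ ^ 2) x)
  rw [hreg.sum_adjMatrix_pow_apply, sum_congr rfl fun z hz => by
    rw [adjMatrix_sq_apply, hl x z ((mem_neighborFinset _ _ _).1 hz)]] at this
  simp only [adjMatrix_sq_apply, inter_self, card_neighborFinset_eq_degree, hreg x,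
    sum_const, nsmul_eq_mul] at this ⊢
  linarith

lemma adjMatrix_pow_three_apply_of_adj (hreg : G.IsRegularOfDegree k)
    (hl : ∀ x y, G.Adj x y → #(G.neighborFinset x ∩ G.neighborFinset y) = l) {x y : V}
    (hxy : G.Adj x y) : (G.adjMatrix ℝ ^ 3) x y
      = k + l ^ 2 + ∑ z ∈ Gᶜ.neighborFinset x ∩ G.neighborFinset y, (G.adjMatrix ℝ ^ 2) x z := by
  rw [pow_succ, mul_adjMatrix_apply, sum_neighborFinset_eq_of_adj hxy,
    sum_congr rfl fun u hu => by
      rw [adjMatrix_sq_apply, hl x u ((mem_neighborFinset _ _ _).1 (mem_inter.1 hu).1)]]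
  simp [adjMatrix_sq_apply, hreg x, hl x y hxy, sq]

lemma sum_compl_neighborFinset_adjMatrix_sq_sq (hreg : G.IsRegularOfDegree k)
    (hl : ∀ x y, G.Adj x y → #(G.neighborFinset x ∩ G.neighborFinset y) = l) {T : ℝ}
    (hT : ∀ x y, G.Adj x y → (G.adjMatrix ℝ ^ 3) x y = T) (x : V) :
    ∑ z ∈ Gᶜ.neighborFinset x, (G.adjMatrix ℝ ^ 2) x z ^ 2 = k * (T - k - l ^ 2) := by
  have hdiag : ∑ z, (G.adjMatrix ℝ ^ 2) x z ^ 2 = k * T :=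
    calc ∑ z, (G.adjMatrix ℝ ^ 2) x z ^ 2
        = (G.adjMatrix ℝ ^ 2 * G.adjMatrix ℝ ^ 2) x x := by
          rw [Matrix.mul_apply]
          refine sum_congr rfl fun z _ => ?_
          rw [sq ((G.adjMatrix ℝ ^ 2) x z), adjMatrix_sq_apply z x, inter_comm,
            ← adjMatrix_sq_apply]
      _ = (G.adjMatrix ℝ * G.adjMatrix ℝ ^ 3) x x := by rw [← pow_add, ← pow_succ']
      _ = k * T := by
          rw [adjMatrix_mul_apply, sum_congr rfl fun u hu =>
            hT u x ((mem_neighborFinset _ _ _).1 hu).symm]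
          simp [hreg x]
  have := sum_eq_add_sum_neighborFinset_add_sum_compl (G := G) x
    (fun z => (G.adjMatrix ℝ ^ 2) x z ^ 2)
  rw [hdiag, sum_congr rfl fun z hz => by
    rw [adjMatrix_sq_apply, hl x z ((mem_neighborFinset _ _ _).1 hz)]] at this
  simp only [adjMatrix_sq_apply, inter_self, card_neighborFinset_eq_degree, hreg x,
    sum_const, nsmul_eq_mul] at this ⊢
  linarith

lemma IsSRGWith.sq_eq_of_isAdjEigenvalue {n μ : ℕ} (h : G.IsSRGWith n k l μ) {θ : ℝ}
    (hθ : IsAdjEigenvalue G θ) (hθk : θ ≠ k) : θ ^ 2 = (l - μ) * θ + (k - μ) := by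
  obtain ⟨f, hf0, hf⟩ := hθ
  have hsum : ∑ x, f x = 0 := by
    have := h.regular.sum_adjMatrix_mulVec f
    simp only [hf, Pi.smul_apply, smul_eq_mul, ← mul_sum] at this
    exact (mul_eq_mul_right_iff.1 this).resolve_left hθk
  obtain ⟨x, hx⟩ := Function.ne_iff.1 hf0
  have hcompl : (Gᶜ.adjMatrix ℝ *ᵥ f) x = -f x - θ * f x := by
    have := sum_eq_add_sum_neighborFinset_add_sum_compl (G := G) x f
    rw [hsum, ← adjMatrix_mulVec_apply, hf] at this
    rw [adjMatrix_mulVec_apply]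
    simp only [Pi.smul_apply, smul_eq_mul] at this
    linarith
  have hsq := congrFun (congrArg (· *ᵥ f) h.matrix_eq) x
  simp only [sq, ← mulVec_mulVec, hf, mulVec_smul, add_mulVec, smul_mulVec, one_mulVec,
    Pi.add_apply, Pi.smul_apply, smul_eq_mul, hcompl] at hsq
  simp only [nsmul_eq_mul] at hsq
  apply mul_right_cancel₀ hx
  linear_combination hsq

end SimpleGraph

section RegularClique

variable [Fintype V] {G : SimpleGraph V} {C : Finset V} {e k l : ℕ}

lemma IsRegularCliqueWith.exists_adj_of_notMem (hC : IsRegularCliqueWith G C e) {x : V}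
    (hx : x ∉ C) : ∃ y ∈ C, G.Adj x y := by
  obtain ⟨y, hy⟩ := card_pos.1 (hC.2.2 x hx ▸ hC.2.1)
  exact ⟨y, mem_filter.1 hy⟩

lemma IsRegularCliqueWith.nonempty [Nonempty V] (hC : IsRegularCliqueWith G C e) :
    C.Nonempty := by
  obtain ⟨x⟩ := ‹Nonempty V›
  by_cases hx : x ∈ C
  · exact ⟨x, hx⟩
  · obtain ⟨y, hy, -⟩ := hC.exists_adj_of_notMem hx
    exact ⟨y, hy⟩

lemma IsRegularCliqueWith.preconnected (hC : IsRegularCliqueWith G C e) : G.Preconnected := by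
  have hreach (x : V) {c : V} (hc : c ∈ C) : G.Reachable x c := by
    have hclique {a : V} (ha : a ∈ C) : G.Reachable a c := by
      rcases eq_or_ne a c with rfl | hac
      · rfl
      · exact (hC.1 ha hc hac).reachable
    by_cases hx : x ∈ C
    · exact hclique hx
    · obtain ⟨y, hy, hxy⟩ := hC.exists_adj_of_notMem hx
      exact hxy.reachable.trans (hclique hy)
  intro x y
  have : Nonempty V := ⟨x⟩
  obtain ⟨c, hc⟩ := hC.nonempty
  exact (hreach x hc).trans (hreach y hc).symm

lemma IsRegularCliqueWith.one_lt_card (hC : IsRegularCliqueWith G C e)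
    (hreg : G.IsRegularOfDegree k) (htop : G ≠ ⊤) : 1 < #C := by
  obtain ⟨x, y, hxy, hnadj⟩ := ne_top_iff_exists_not_adj.1 htop
  have : Nonempty V := ⟨x⟩
  obtain ⟨c, hc⟩ := hC.nonempty
  obtain ⟨z, hz⟩ : (Gᶜ.neighborFinset c).Nonempty := by
    rw [← card_pos, ← Nat.cast_pos (α := ℝ), hreg.card_compl_neighborFinset,
      ← hreg.card_compl_neighborFinset x, Nat.cast_pos, card_pos]
    exact ⟨y, by simpa using ⟨hxy, hnadj⟩⟩
  rw [mem_neighborFinset, compl_adj] at hz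
  have hzC : z ∉ C := fun hzC => hz.2 (hC.1 hc hzC hz.1)
  obtain ⟨c', hc', hzc'⟩ := hC.exists_adj_of_notMem hzC
  exact Finset.one_lt_card.2 ⟨c, hc, c', hc', by rintro rfl; exact hz.2 hzc'.symm⟩

lemma IsRegularCliqueWith.sum_erase_sum_compl_neighborFinset_inter {M : Type*}
    [AddCommMonoid M] (hC : IsRegularCliqueWith G C e) {x : V} (hx : x ∈ C) (f : V → M) :
    ∑ y ∈ C.erase x, ∑ z ∈ Gᶜ.neighborFinset x ∩ G.neighborFinset y, f z
      = e • ∑ z ∈ Gᶜ.neighborFinset x, f z := by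
  rw [sum_comm' (t' := Gᶜ.neighborFinset x) (s' := fun z => (C.erase x).filter (G.Adj z))
    fun y z => ?_, smul_sum]
  · refine sum_congr rfl fun z hz => ?_
    rw [mem_neighborFinset, compl_adj] at hz
    have hzC : z ∉ C := fun hzC => hz.2 (hC.1 hx hzC hz.1)
    rw [sum_const, filter_erase, erase_eq_of_notMem fun h => hz.2 (mem_filter.1 h).2.symm,
      hC.2.2 z hzC]
  · simp only [mem_erase, mem_inter, mem_filter, mem_neighborFinset, G.adj_comm y z]
    tauto

/-- Double count the pairs `(y, z)` with `y ∈ C \ {c}` and `z` a non-neighbour of `c` adjacent to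
`y`, once plainly and once weighted by `(A²) c z`. This gives an identity between `n, k, λ, T`
only, so the conclusion holds at every vertex `x`, not just at `c`. -/
lemma IsRegularCliqueWith.card_mul_sum_sq_eq_sq_sum (hC : IsRegularCliqueWith G C e)
    (hreg : G.IsRegularOfDegree k)
    (hl : ∀ x y, G.Adj x y → #(G.neighborFinset x ∩ G.neighborFinset y) = l) (htop : G ≠ ⊤)
    {T : ℝ} (hT : ∀ x y, G.Adj x y → (G.adjMatrix ℝ ^ 3) x y = T) (x : V) :
    #(Gᶜ.neighborFinset x) * ∑ z ∈ Gᶜ.neighborFinset x, (G.adjMatrix ℝ ^ 2) x z ^ 2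
      = (∑ z ∈ Gᶜ.neighborFinset x, (G.adjMatrix ℝ ^ 2) x z) ^ 2 := by
  have hC2 := hC.one_lt_card hreg htop
  obtain ⟨c, hc⟩ := card_pos.1 (zero_lt_one.trans hC2)
  have hadj {y : V} (hy : y ∈ C.erase c) : G.Adj c y :=
    hC.1 hc (mem_of_mem_erase hy) (ne_of_mem_erase hy).symm
  have hweight {y : V} (hy : y ∈ C.erase c) :
      ∑ z ∈ Gᶜ.neighborFinset c ∩ G.neighborFinset y, (G.adjMatrix ℝ ^ 2) c z
        = T - k - l ^ 2 := by
    linarith [adjMatrix_pow_three_apply_of_adj hreg hl (hadj hy), hT c y (hadj hy)]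
  have hcount := hC.sum_erase_sum_compl_neighborFinset_inter hc (fun _ => (1 : ℝ))
  have hsum := hC.sum_erase_sum_compl_neighborFinset_inter hc ((G.adjMatrix ℝ ^ 2) c)
  simp only [sum_const, nsmul_eq_mul, mul_one] at hcount
  rw [sum_congr rfl fun y hy =>
    card_compl_neighborFinset_inter_of_adj hreg hl (hadj hy)] at hcount
  rw [sum_congr rfl fun y hy => hweight hy] at hsum
  simp only [sum_const, nsmul_eq_mul, card_erase_of_mem hc,
    sum_compl_neighborFinset_adjMatrix_sq hreg hl, hreg.card_compl_neighborFinset] at hcount hsum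
  rw [sum_compl_neighborFinset_adjMatrix_sq_sq hreg hl hT,
    sum_compl_neighborFinset_adjMatrix_sq hreg hl, hreg.card_compl_neighborFinset]
  have hs : ((#C - 1 : ℕ) : ℝ) ≠ 0 := by
    rw [Nat.cast_ne_zero]
    omega
  refine mul_left_cancel₀ hs ?_
  linear_combination k * (Fintype.card V - 1 - k) * hsum - (k : ℝ) ^ 2 * (k - 1 - l) * hcount

lemma IsRegularCliqueWith.exists_isSRGWith (hC : IsRegularCliqueWith G C e)
    (hreg : G.IsRegularOfDegree k)
    (hl : ∀ x y, G.Adj x y → #(G.neighborFinset x ∩ G.neighborFinset y) = l) (htop : G ≠ ⊤)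
    {T : ℝ} (hT : ∀ x y, G.Adj x y → (G.adjMatrix ℝ ^ 3) x y = T) :
    ∃ μ, G.IsSRGWith (Fintype.card V) k l μ := by
  obtain ⟨x₀, z₀, hxz₀, hn₀⟩ := ne_top_iff_exists_not_adj.1 htop
  have hmean {x z : V} (hxz : x ≠ z) (hn : ¬G.Adj x z) :
      ((Fintype.card V : ℝ) - 1 - k) * (G.adjMatrix ℝ ^ 2) x z = k * (k - 1 - l) := by
    rw [← hreg.card_compl_neighborFinset x, ← sum_compl_neighborFinset_adjMatrix_sq hreg hl x]
    exact Finset.card_mul_eq_sum_of_card_mul_sum_sq_eq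
      (hC.card_mul_sum_sq_eq_sq_sum hreg hl htop hT x) (by simpa using ⟨hxz, hn⟩)
  have hW : ((Fintype.card V : ℝ) - 1 - k) ≠ 0 := by
    rw [← hreg.card_compl_neighborFinset x₀, Nat.cast_ne_zero]
    exact card_ne_zero.2 ⟨z₀, by simpa using ⟨hxz₀, hn₀⟩⟩
  refine ⟨#(G.neighborFinset x₀ ∩ G.neighborFinset z₀), rfl, hreg,
    fun v w h => (card_commonNeighbors_eq v w).trans (hl v w h), fun v w hvw hn => ?_⟩
  have := (hmean hvw hn).trans (hmean hxz₀ hn₀).symm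
  rw [adjMatrix_sq_apply, adjMatrix_sq_apply] at this
  rw [card_commonNeighbors_eq]
  exact_mod_cast mul_left_cancel₀ hW this

end RegularClique

/-- There is no Neumaier graph whose adjacency matrix has exactly four
distinct real eigenvalues. -/
theorem stmt19 [Fintype V] (G : SimpleGraph V) (hN : IsNeumaier G) :
    {θ : ℝ | IsAdjEigenvalue G θ}.ncard ≠ 4 := by
  intro h4
  obtain ⟨⟨-, k, l, -, hreg, hl⟩, htop, C, e, hC⟩ := hN
  replace hl x y (hxy : G.Adj x y) := (card_commonNeighbors_eq x y).symm.trans (hl x y hxy)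
  obtain ⟨-, f, hf, -⟩ := Set.nonempty_of_ncard_ne_zero (h4 ▸ four_ne_zero)
  have : Nonempty V := ⟨(Function.ne_iff.1 hf).choose⟩
  obtain ⟨θ₁, θ₂, θ₃, h₁₂, h₁₃, h₂₃, hS⟩ := Set.ncard_eq_three.1 <| by
    rw [Set.ncard_sdiff_singleton_of_mem (s := {θ | IsAdjEigenvalue G θ}) hreg.isAdjEigenvalue,
      h4]
  have hspec (θ : ℝ) (hθ : IsAdjEigenvalue G θ) (hθk : θ ≠ k) : θ = θ₁ ∨ θ = θ₂ ∨ θ = θ₃ := by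
    have : θ ∈ {θ | IsAdjEigenvalue G θ} \ {(k : ℝ)} := ⟨hθ, hθk⟩
    simpa [hS] using this
  obtain ⟨T, hT⟩ := hC.preconnected.exists_adjMatrix_pow_three_eq_of_adj hreg hl hspec
  obtain ⟨μ, hsrg⟩ := hC.exists_isSRGWith hreg hl htop hT
  have hroot (θ : ℝ) (hθ : θ ∈ ({θ₁, θ₂, θ₃} : Set ℝ)) : θ ^ 2 = (l - μ) * θ + (k - μ) := by
    rw [← hS] at hθ
    exact hsrg.sq_eq_of_isAdjEigenvalue hθ.1 hθ.2
  exact h₂₃ (eq_of_sq_eq_mul_add_of_ne (hroot θ₁ (by simp)) (hroot θ₂ (by simp))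
    (hroot θ₃ (by simp)) h₁₂ h₁₃)
end
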